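/- arXiv:2603.29048 — 3 statements merged into one kernel-verified Lean document; each statement's English description precedes it below -/
import Mathlib

section
/- Let Z : (0,∞) → ℝ be a nonnegative measurable function with Z ∈ L²(0,∞) and ∫₀^∞ Z(t)² dt ≤ Y for some Y > 0. Suppose there exist α ∈ (1,2), ζ > 0, and an open set M ⊆ (0,∞) such that (∫ₛ^∞ Z(t)² dt)^α ≤ ζ · Z(s)² for almost every s ∈ M. Then Z is integrable on M, and there exists a constant C depending only on Y, α, ζ (not on M) such that ∫_M Z(t) dt ≤ C. -/
open MeasureTheory Set Filter
open scoped ENNReal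

/-! Write `F s = ∫_s^∞ Z²` and cut `M` along the dyadic levels of `F`. On the piece where
`F ∈ (b, 2b]` the tail inequality forces `Z ≥ δ = b^(α/2)/√ζ`, so there `Z ≤ Z²/δ`; and since `F`
is continuous, the integral of `Z²` over the piece is at most `2b`. The piece therefore contributes
at most `2√ζ b^(1-α/2)`, and as `1 - α/2 > 0` these bounds sum geometrically over
`b = Y/2^(k+1)`. Where `F = 0`, `Z` vanishes almost everywhere. -/

theorem ContinuousOn.measurableSet_inter_preimage {α β : Type*} [TopologicalSpace α]
    [MeasurableSpace α] [OpensMeasurableSpace α] [TopologicalSpace β] [MeasurableSpace β]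
    [BorelSpace β] {f : α → β} {s : Set α} {t : Set β} (hf : ContinuousOn f s)
    (hs : MeasurableSet s) (ht : MeasurableSet t) : MeasurableSet (s ∩ f ⁻¹' t) := by
  have := hs.subtype_image ((continuousOn_iff_continuous_domRestrict.1 hf).measurable ht)
  rwa [domRestrict_eq, preimage_comp, Subtype.image_preimage_coe] at this

theorem lintegral_ofReal_le_inv_mul_lintegral_sq {α : Type*} [MeasurableSpace α]
    {μ : Measure α} {f : α → ℝ} {δ : ℝ} (hδ : 0 < δ) (hf : ∀ᵐ x ∂μ, δ ≤ f x) :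
    ∫⁻ x, ENNReal.ofReal (f x) ∂μ ≤ ENNReal.ofReal δ⁻¹ * ∫⁻ x, ENNReal.ofReal (f x ^ 2) ∂μ := by
  rw [← lintegral_const_mul' _ _ ENNReal.ofReal_ne_top]
  refine lintegral_mono_ae (hf.mono fun x hx => ?_)
  rw [← ENNReal.ofReal_mul (inv_nonneg.2 hδ.le)]
  refine ENNReal.ofReal_le_ofReal ?_
  rw [inv_mul_eq_div, le_div_iff₀ hδ]
  nlinarith

theorem integrable_and_integral_le_of_lintegral_ofReal_le {α : Type*} [MeasurableSpace α]
    {μ : Measure α} {f : α → ℝ} {C : ℝ} (hfm : AEStronglyMeasurable f μ) (hf0 : 0 ≤ᵐ[μ] f)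
    (hC : 0 ≤ C) (h : ∫⁻ x, ENNReal.ofReal (f x) ∂μ ≤ ENNReal.ofReal C) :
    Integrable f μ ∧ ∫ x, f x ∂μ ≤ C := by
  refine ⟨⟨hfm, (hasFiniteIntegral_iff_ofReal hf0).2 (h.trans_lt ENNReal.ofReal_lt_top)⟩, ?_⟩
  rw [integral_eq_lintegral_of_nonneg_ae hf0 hfm]
  exact ENNReal.toReal_le_of_le_ofReal hC h

theorem setIntegral_le_of_forall_setIntegral_Ioi_le {μ : Measure ℝ} [NullSingletonClass μ]
    {f : ℝ → ℝ} {a₀ c : ℝ} {A : Set ℝ} (hf : IntegrableOn f (Ioi a₀) μ) (hf0 : ∀ x, 0 ≤ f x)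
    (hc : 0 ≤ c) (hA : A ⊆ Ici a₀) (hAc : ∀ s ∈ A, ∫ t in Ioi s, f t ∂μ ≤ c) : ∫ t in A, f t ∂μ ≤ c := by
  rcases A.eq_empty_or_nonempty with rfl | hne
  · simpa using hc
  have hbdd : BddBelow A := ⟨a₀, hA⟩
  have ha : a₀ ≤ sInf A := le_csInf hne hA
  have htail : ∫ t in Ioi (sInf A), f t ∂μ ≤ c :=
    ((hf.continuousOn_Ici_primitive_Ioi _ ha).mono hA).closure_le (csInf_mem_closure hne hbdd)
      continuousWithinAt_const hAc
  calc ∫ t in A, f t ∂μ ≤ ∫ t in Ici (sInf A), f t ∂μ :=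
        setIntegral_mono_set
          ((integrableOn_Ici_iff_integrableOn_Ioi).2 (hf.mono_set (Ioi_subset_Ioi ha)))
          (Eventually.of_forall hf0)
          (show A ⊆ Ici (sInf A) from fun _ hx => csInf_le hbdd hx).eventuallyLE
    _ = ∫ t in Ioi (sInf A), f t ∂μ := integral_Ici_eq_integral_Ioi
    _ ≤ c := htail

theorem Ioc_zero_subset_iUnion_Ioc_div_two_pow (Y : ℝ) :
    Ioc 0 Y ⊆ ⋃ k : ℕ, Ioc (Y / 2 ^ (k + 1)) (2 * (Y / 2 ^ (k + 1))) := by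
  rintro x ⟨hx0, hxY⟩
  obtain ⟨k, hk, hk'⟩ := exists_nat_pow_near ((one_le_div hx0).2 hxY) one_lt_two
  rw [le_div_iff₀ hx0] at hk
  rw [div_lt_iff₀ hx0] at hk'
  refine mem_iUnion.2 ⟨k, ?_, ?_⟩
  · rw [div_lt_iff₀ (by positivity)]
    linarith
  · rw [pow_succ, ← div_div, mul_div_cancel₀ _ two_ne_zero, le_div_iff₀ (by positivity)]
    linarith

theorem summable_rpow_div_two_pow {Y β : ℝ} (hY : 0 ≤ Y) (hβ : 0 < β) :
    Summable fun k : ℕ => (Y / 2 ^ (k + 1)) ^ β := by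
  have h : ∀ k : ℕ, (Y / 2 ^ (k + 1)) ^ β = Y ^ β * ((2 ^ β)⁻¹) ^ (k + 1) := fun k => by
    rw [Real.div_rpow hY (by positivity), ← Real.rpow_pow_comm zero_le_two, inv_pow,
      div_eq_mul_inv]
  simp_rw [h]
  refine Summable.mul_left _ ((summable_nat_add_iff 1).2 (summable_geometric_of_lt_one
    (by positivity) (inv_lt_one_of_one_lt₀ (Real.one_lt_rpow one_lt_two hβ))))

section TailInequality

variable {Z : ℝ → ℝ} {α ζ : ℝ}

theorem ae_eq_zero_of_forall_tail_eq_zero (hZL2 : IntegrableOn (fun t => Z t ^ 2) (Ioi 0))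
    {A : Set ℝ} (hA0 : A ⊆ Ioi 0) (hA : ∀ s ∈ A, ∫ t in Ioi s, Z t ^ 2 = 0) :
    ∀ᵐ s ∂(volume.restrict A), Z s = 0 := by
  have h : ∫ s in A, Z s ^ 2 = 0 :=
    le_antisymm (setIntegral_le_of_forall_setIntegral_Ioi_le hZL2 (fun t => sq_nonneg _) le_rfl
      (hA0.trans Ioi_subset_Ici_self) fun s hs => (hA s hs).le)
      (integral_nonneg fun t => sq_nonneg _)
  filter_upwards [(integral_eq_zero_iff_of_nonneg (fun t => sq_nonneg _)
    (hZL2.mono_set hA0)).1 h] with s hs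
  exact pow_eq_zero_iff two_ne_zero |>.1 hs

theorem lintegral_ofReal_le_of_tail_mem_Ioc (hα : 0 ≤ α) (hζ : 0 < ζ)
    (hZL2 : IntegrableOn (fun t => Z t ^ 2) (Ioi 0)) {A : Set ℝ} (hA : MeasurableSet A)
    (hA0 : A ⊆ Ioi 0) (hZnn : ∀ s ∈ A, 0 ≤ Z s) {b : ℝ} (hb : 0 < b)
    (hlevel : ∀ s ∈ A, ∫ t in Ioi s, Z t ^ 2 ∈ Ioc b (2 * b))
    (hae : ∀ᵐ s ∂(volume.restrict A), (∫ t in Ioi s, Z t ^ 2) ^ α ≤ ζ * Z s ^ 2) :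
    ∫⁻ s in A, ENNReal.ofReal (Z s) ≤ ENNReal.ofReal (2 * √ζ * b ^ (1 - α / 2)) := by
  set δ := b ^ (α / 2) / √ζ with hδ_def
  have hδ : 0 < δ := by positivity
  have hZδ : ∀ᵐ s ∂(volume.restrict A), δ ≤ Z s := by
    filter_upwards [ae_restrict_mem hA, hae] with s hs hineq
    have hbα : b ^ α ≤ ζ * Z s ^ 2 :=
      (Real.rpow_le_rpow hb.le (hlevel s hs).1.le hα).trans hineq
    have hδsq : δ ^ 2 ≤ Z s ^ 2 := by
      rw [div_pow, Real.sq_sqrt hζ.le, ← Real.rpow_mul_natCast hb.le, div_le_iff₀ hζ]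
      norm_num
      linarith
    exact (pow_le_pow_iff_left₀ hδ.le (hZnn s hs) two_ne_zero).1 hδsq
  have hL2 : ∫ s in A, Z s ^ 2 ≤ 2 * b :=
    setIntegral_le_of_forall_setIntegral_Ioi_le hZL2 (fun t => sq_nonneg _) (by positivity)
      (hA0.trans Ioi_subset_Ici_self) fun s hs => (hlevel s hs).2
  calc ∫⁻ s in A, ENNReal.ofReal (Z s)
      ≤ ENNReal.ofReal δ⁻¹ * ∫⁻ s in A, ENNReal.ofReal (Z s ^ 2) :=
        lintegral_ofReal_le_inv_mul_lintegral_sq hδ hZδ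
    _ = ENNReal.ofReal δ⁻¹ * ENNReal.ofReal (∫ s in A, Z s ^ 2) := by
        rw [ofReal_integral_eq_lintegral_ofReal (hZL2.mono_set hA0)
          (Eventually.of_forall fun t => sq_nonneg (Z t))]
    _ ≤ ENNReal.ofReal δ⁻¹ * ENNReal.ofReal (2 * b) := by gcongr
    _ = ENNReal.ofReal (2 * √ζ * b ^ (1 - α / 2)) := by
        rw [← ENNReal.ofReal_mul (inv_nonneg.2 hδ.le), Real.rpow_sub hb, Real.rpow_one, hδ_def]
        congr 1
        field_simp

theorem lintegral_ofReal_le_of_tail_rpow_le {Y : ℝ} (hY : 0 < Y) (hα : 0 ≤ α) (hζ : 0 < ζ)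
    (hZL2 : IntegrableOn (fun t => Z t ^ 2) (Ioi 0)) (hint : ∫ t in Ioi 0, Z t ^ 2 ≤ Y)
    {M : Set ℝ} (hM : IsOpen M) (hM0 : M ⊆ Ioi 0) (hZnn : ∀ s ∈ M, 0 ≤ Z s)
    (hae : ∀ᵐ s ∂(volume.restrict M), (∫ t in Ioi s, Z t ^ 2) ^ α ≤ ζ * Z s ^ 2) :
    ∫⁻ s in M, ENNReal.ofReal (Z s)
      ≤ ∑' k : ℕ, ENNReal.ofReal (2 * √ζ * (Y / 2 ^ (k + 1)) ^ (1 - α / 2)) := by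
  set F : ℝ → ℝ := fun s => ∫ t in Ioi s, Z t ^ 2
  set level : ℕ → Set ℝ := fun k => M ∩ F ⁻¹' Ioc (Y / 2 ^ (k + 1)) (2 * (Y / 2 ^ (k + 1)))
  have hF : ∀ s ∈ M, F s = 0 ∨ F s ∈ Ioc 0 Y := fun s hs =>
    (eq_or_lt_of_le (integral_nonneg fun t => sq_nonneg (Z t))).imp Eq.symm fun hpos =>
      ⟨hpos, (setIntegral_mono_set hZL2 (Eventually.of_forall fun t => sq_nonneg (Z t))
        (Ioi_subset_Ioi (hM0 hs).le).eventuallyLE).trans hint⟩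
  have hcover : M ⊆ (M ∩ F ⁻¹' {0}) ∪ ⋃ k, level k := by
    intro s hs
    rcases hF s hs with h0 | hpos
    · exact Or.inl ⟨hs, h0⟩
    · obtain ⟨k, hk⟩ := mem_iUnion.1 (Ioc_zero_subset_iUnion_Ioc_div_two_pow Y hpos)
      exact Or.inr (mem_iUnion.2 ⟨k, hs, hk⟩)
  have hzero : ∫⁻ s in M ∩ F ⁻¹' {0}, ENNReal.ofReal (Z s) = 0 := by
    have hZ0 : ∀ᵐ s ∂(volume.restrict (M ∩ F ⁻¹' {0})), Z s = 0 :=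
      ae_eq_zero_of_forall_tail_eq_zero hZL2 (inter_subset_left.trans hM0) fun s hs => hs.2
    rw [lintegral_congr_ae (g := fun _ => 0) (hZ0.mono fun s hs => by simp [hs]), lintegral_zero]
  have hFcont : ContinuousOn F M :=
    hZL2.continuousOn_Ici_primitive_Ioi.mono (hM0.trans Ioi_subset_Ici_self)
  have hlevel : ∀ k, ∫⁻ s in level k, ENNReal.ofReal (Z s)
      ≤ ENNReal.ofReal (2 * √ζ * (Y / 2 ^ (k + 1)) ^ (1 - α / 2)) := fun k =>
    lintegral_ofReal_le_of_tail_mem_Ioc hα hζ hZL2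
      (hFcont.measurableSet_inter_preimage hM.measurableSet measurableSet_Ioc)
      (inter_subset_left.trans hM0) (fun s hs => hZnn s hs.1) (by positivity)
      (fun s hs => hs.2) (ae_restrict_of_ae_restrict_of_subset inter_subset_left hae)
  calc ∫⁻ s in M, ENNReal.ofReal (Z s)
      ≤ ∫⁻ s in (M ∩ F ⁻¹' {0}) ∪ ⋃ k, level k, ENNReal.ofReal (Z s) := lintegral_mono_set hcover
    _ ≤ (∫⁻ s in M ∩ F ⁻¹' {0}, ENNReal.ofReal (Z s))
          + ∫⁻ s in ⋃ k, level k, ENNReal.ofReal (Z s) := lintegral_union_le _ _ _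
    _ ≤ ∑' k, ∫⁻ s in level k, ENNReal.ofReal (Z s) := by
        rw [hzero, zero_add]
        exact lintegral_iUnion_le _ _
    _ ≤ _ := ENNReal.tsum_le_tsum hlevel

end TailInequality

/-- Feireisl–Simondon integrability lemma: a nonnegative square-integrable function on
`(0,∞)` satisfying the tail inequality on an open set `M` is integrable on `M`, with a
bound depending only on `Y`, `α`, `ζ` (not on `M`). -/
theorem stmt0 (Y α ζ : ℝ) (hY : 0 < Y) (hα1 : 1 < α) (hα2 : α < 2) (hζ : 0 < ζ)
    (Z : ℝ → ℝ) (hZmeas : Measurable Z) (hZnn : ∀ t ∈ Set.Ioi (0:ℝ), 0 ≤ Z t)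
    (hZL2 : IntegrableOn (fun t => Z t ^ 2) (Set.Ioi 0))
    (hint : ∫ t in Set.Ioi (0:ℝ), Z t ^ 2 ≤ Y) :
    ∃ C > 0, ∀ M : Set ℝ, IsOpen M → M ⊆ Set.Ioi 0 →
      (∀ᵐ s ∂(volume.restrict M), (∫ t in Set.Ioi s, Z t ^ 2) ^ α ≤ ζ * Z s ^ 2) →
      IntegrableOn Z M ∧ ∫ t in M, Z t ≤ C := by
  have hβ : 0 < 1 - α / 2 := by linarith
  have hsum := summable_rpow_div_two_pow hY.le hβ
  set C := 2 * √ζ * ∑' k : ℕ, (Y / 2 ^ (k + 1)) ^ (1 - α / 2)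
  have hC : 0 < C := mul_pos (by positivity)
    (hsum.tsum_pos (fun k => by positivity) 0 (by positivity))
  refine ⟨C, hC, fun M hM hM0 hae => ?_⟩
  have hbound : ∫⁻ s in M, ENNReal.ofReal (Z s) ≤ ENNReal.ofReal C := by
    refine (lintegral_ofReal_le_of_tail_rpow_le hY (by linarith) hζ hZL2 hint hM hM0
      (fun s hs => hZnn s (hM0 hs)) hae).trans_eq ?_
    rw [← ENNReal.ofReal_tsum_of_nonneg (fun k => by positivity) (hsum.mul_left _), tsum_mul_left]
  exact integrable_and_integral_le_of_lintegral_ofReal_le hZmeas.aestronglyMeasurable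
    ((ae_restrict_mem hM.measurableSet).mono fun s hs => hZnn s (hM0 hs)) hC.le hbound
end

section
/- Let f : [0,∞) → [0,∞) be measurable with ∫₀^∞ f(s) ds ≤ Y < ∞, let E : [0,∞) → ℝ be nonincreasing with E(t) → E_∞, and suppose E(t) - E(s) ≤ -∫ₛᵗ f(τ) dτ for all 0 ≤ s ≤ t (energy inequality). Suppose there exist constants θ ∈ (0, 1/2], C > 0, M > 0, T* > 0, and a measurable set A ⊆ (T*,∞) such that: (i) (E(s) - E_∞)^{1-θ} ≤ C √(f(s)) for a.e. s ∈ A; (ii) f(s) ≥ M² for a.e. s ∈ (T*,∞) \ A; (iii) E(0) - E_∞ ≤ B for some B > 0. Then for a.e. s ∈ (T*,∞): (∫ₛ^∞ f(τ) dτ)^{2(1-θ)} ≤ (C² + B^{2(1-θ)}/M²) · f(s). -/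
open MeasureTheory Set Filter

/-- Good-times/bad-times splitting: combining the Łojasiewicz–Simon inequality on the
good set `A` with the lower bound on the dissipation on the bad set yields the tail
inequality for the dissipation rate. -/
theorem stmt11 (f : ℝ → ℝ) (hfm : Measurable f) (hfnn : ∀ t, 0 ≤ t → 0 ≤ f t)
    (Y : ℝ) (hfint : IntegrableOn f (Set.Ici 0)) (hY : ∫ s in Set.Ici (0:ℝ), f s ≤ Y)
    (E : ℝ → ℝ) (Einf : ℝ)
    (hE : ∀ s t : ℝ, 0 ≤ s → s ≤ t → E t ≤ E s)
    (hElim : Tendsto E atTop (nhds Einf))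
    (hEineq : ∀ s t : ℝ, 0 ≤ s → s ≤ t → E t - E s ≤ -∫ τ in Set.Ioc s t, f τ)
    (θ C M Tstar B : ℝ) (hθ : 0 < θ) (hθ' : θ ≤ 1/2) (hC : 0 < C) (hM : 0 < M)
    (hT : 0 < Tstar) (hB : 0 < B)
    (A : Set ℝ) (hA : MeasurableSet A) (hAsub : A ⊆ Set.Ioi Tstar)
    (hi : ∀ᵐ s ∂(volume.restrict A), (E s - Einf) ^ (1 - θ) ≤ C * Real.sqrt (f s))
    (hii : ∀ᵐ s ∂(volume.restrict (Set.Ioi Tstar \ A)), M ^ 2 ≤ f s)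
    (hiii : E 0 - Einf ≤ B) :
    ∀ᵐ s ∂(volume.restrict (Set.Ioi Tstar)),
      (∫ τ in Set.Ioi s, f τ) ^ (2 * (1 - θ)) ≤ (C ^ 2 + B ^ (2 * (1 - θ)) / M ^ 2) * f s := by
  -- E t ≥ Einf for t ≥ 0
  have hEinf : ∀ t : ℝ, 0 ≤ t → Einf ≤ E t := by
    intro t ht
    refine le_of_tendsto hElim ?_
    filter_upwards [eventually_ge_atTop t] with u hu
    exact hE t u ht hu
  -- tail bound
  have htail : ∀ s : ℝ, 0 ≤ s → ∫ τ in Set.Ioi s, f τ ≤ E s - Einf := by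
    intro s hs
    have hint : IntegrableOn f (Set.Ioi s) := hfint.mono_set fun x hx => le_of_lt (lt_of_le_of_lt hs hx)
    have h1 : Tendsto (fun t => ∫ τ in s..t, f τ) atTop (nhds (∫ τ in Set.Ioi s, f τ)) :=
      intervalIntegral_tendsto_integral_Ioi s hint tendsto_id
    refine le_of_tendsto h1 ?_
    filter_upwards [eventually_ge_atTop s] with t ht
    rw [intervalIntegral.integral_of_le ht]
    have h2 := hEineq s t hs ht
    have h3 := hEinf t (hs.trans ht)
    linarith
  have htailnn : ∀ s : ℝ, 0 ≤ s → 0 ≤ ∫ τ in Set.Ioi s, f τ := by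
    intro s hs
    refine setIntegral_nonneg measurableSet_Ioi fun x hx => hfnn x (hs.trans (le_of_lt hx))
  have hEB : ∀ s : ℝ, 0 ≤ s → E s - Einf ≤ B := fun s hs => by
    have := hE 0 s le_rfl hs; linarith
  -- convert a.e. statements
  have hi' : ∀ᵐ s ∂(volume : Measure ℝ), s ∈ A → (E s - Einf) ^ (1 - θ) ≤ C * Real.sqrt (f s) :=
    (ae_restrict_iff' hA).mp hi
  have hii' : ∀ᵐ s ∂(volume : Measure ℝ), s ∈ Set.Ioi Tstar \ A → M ^ 2 ≤ f s :=
    (ae_restrict_iff' (measurableSet_Ioi.diff hA)).mp hii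
  rw [ae_restrict_iff' measurableSet_Ioi]
  filter_upwards [hi', hii'] with s h1 h2 hsT
  have hs0 : (0:ℝ) ≤ s := le_of_lt (hT.trans hsT)
  have hfs : 0 ≤ f s := hfnn s hs0
  set T := ∫ τ in Set.Ioi s, f τ with hTdef
  have hTnn : 0 ≤ T := htailnn s hs0
  have hTle : T ≤ E s - Einf := htail s hs0
  have hexp : (0:ℝ) ≤ 1 - θ := by linarith
  by_cases hsA : s ∈ A
  · -- good set
    have h3 : T ^ (1 - θ) ≤ (E s - Einf) ^ (1 - θ) := Real.rpow_le_rpow hTnn hTle hexp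
    have h4 : T ^ (1 - θ) ≤ C * Real.sqrt (f s) := h3.trans (h1 hsA)
    have h5 : T ^ (2 * (1 - θ)) = (T ^ (1 - θ)) ^ (2:ℕ) := by
      rw [← Real.rpow_natCast (T ^ (1 - θ)) 2, ← Real.rpow_mul hTnn]
      ring_nf
    have h6 : (T ^ (1 - θ)) ^ (2:ℕ) ≤ (C * Real.sqrt (f s)) ^ (2:ℕ) := by
      apply pow_le_pow_left₀ (Real.rpow_nonneg hTnn _) h4
    have h7 : (C * Real.sqrt (f s)) ^ (2:ℕ) = C ^ 2 * f s := by
      rw [mul_pow, Real.sq_sqrt hfs]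
    have h8 : 0 ≤ B ^ (2 * (1 - θ)) / M ^ 2 * f s := by
      apply mul_nonneg (div_nonneg (Real.rpow_nonneg hB.le _) (sq_nonneg M)) hfs
    calc T ^ (2 * (1 - θ)) = (T ^ (1 - θ)) ^ (2:ℕ) := h5
      _ ≤ C ^ 2 * f s := h6.trans_eq h7
      _ ≤ (C ^ 2 + B ^ (2 * (1 - θ)) / M ^ 2) * f s := by nlinarith
  · -- bad set
    have hMf : M ^ 2 ≤ f s := h2 ⟨hsT, hsA⟩
    have hTB : T ≤ B := hTle.trans (hEB s hs0)
    have h3 : T ^ (2 * (1 - θ)) ≤ B ^ (2 * (1 - θ)) :=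
      Real.rpow_le_rpow hTnn hTB (by linarith)
    have hM2 : (0:ℝ) < M ^ 2 := by positivity
    calc T ^ (2 * (1 - θ)) ≤ B ^ (2 * (1 - θ)) := h3
      _ = B ^ (2 * (1 - θ)) / M ^ 2 * M ^ 2 := by field_simp
      _ ≤ B ^ (2 * (1 - θ)) / M ^ 2 * f s := by
          apply mul_le_mul_of_nonneg_left hMf (div_nonneg (Real.rpow_nonneg hB.le _) hM2.le)
      _ ≤ (C ^ 2 + B ^ (2 * (1 - θ)) / M ^ 2) * f s := by nlinarith
end

section
/- Let f : [0,∞) → [0,∞) be measurable with ∫₀^∞ f ds < ∞, and suppose there exist α ∈ (1,2), ζ > 0, T* > 0 such that (∫ₛ^∞ f(τ) dτ)^α ≤ ζ f(s) for a.e. s > T*. Then √f ∈ L¹(T*, ∞). -/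
/-!
Write `F s = ∫_s^∞ f`. The hypothesis reads `F^α ≤ -ζ F'`; integrating it over `(s, t]` and using
that `F` is decreasing gives `(t - s) F(t)^α ≤ ζ F(s)`. Along the dyadic points `2^k T*` this is
a recursion forcing the geometric decay `F(2^k T*) ≤ M θ^k` with `θ^(α-1) = 1/2`, and `α < 2`
means `2θ < 1`. By Cauchy–Schwarz the integral of `√f` over `[2^k T*, 2^(k+1) T*)` is at most
`√(2^k T* · M θ^k) = √(T* M) · √(2θ)^k`, a summable sequence.
-/

open MeasureTheory Set Filter

section Sqrt

variable {X : Type*} [MeasurableSpace X] {μ : Measure X} {g : X → ℝ}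

theorem memLp_two_sqrt (hg : Integrable g μ) (hg0 : 0 ≤ᵐ[μ] g) :
    MemLp (fun x => √(g x)) 2 μ := by
  have hm : AEStronglyMeasurable (fun x => √(g x)) μ :=
    Real.continuous_sqrt.comp_aestronglyMeasurable hg.aestronglyMeasurable
  refine (memLp_two_iff_integrable_sq hm).2 (hg.congr ?_)
  filter_upwards [hg0] with x hx
  exact (Real.sq_sqrt hx).symm

theorem MeasureTheory.Integrable.sqrt [IsFiniteMeasure μ] (hg : Integrable g μ)
    (hg0 : 0 ≤ᵐ[μ] g) : Integrable (fun x => √(g x)) μ :=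
  (memLp_two_sqrt hg hg0).integrable one_le_two

theorem integral_sqrt_le_sqrt_mul_integral [IsFiniteMeasure μ] (hg : Integrable g μ)
    (hg0 : 0 ≤ᵐ[μ] g) : ∫ x, √(g x) ∂μ ≤ √(μ.real univ * ∫ x, g x ∂μ) := by
  have hCS := integral_mul_le_Lp_mul_Lq_of_nonneg (μ := μ) Real.HolderConjugate.two_two
    (f := fun _ => (1 : ℝ)) (.of_forall fun _ => zero_le_one)
    (.of_forall fun x => Real.sqrt_nonneg (g x)) (memLp_const 1)
    (by simpa using memLp_two_sqrt hg hg0)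
  have hsq : ∫ x, √(g x) ^ (2 : ℝ) ∂μ = ∫ x, g x ∂μ := by
    refine integral_congr_ae ?_
    filter_upwards [hg0] with x hx
    rw [Real.rpow_two, Real.sq_sqrt hx]
  simp only [one_mul, Real.one_rpow, integral_const, smul_eq_mul, mul_one, hsq] at hCS
  rwa [Real.sqrt_mul measureReal_nonneg, Real.sqrt_eq_rpow, Real.sqrt_eq_rpow]

end Sqrt

theorem integral_sqrt_Ico_le {f : ℝ → ℝ} {s t B : ℝ} (hst : s ≤ t)
    (hf : IntegrableOn f (Ico s t)) (hf0 : 0 ≤ᵐ[volume.restrict (Ico s t)] f)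
    (hB : ∫ x in Ico s t, f x ≤ B) :
    ∫ x in Ico s t, √(f x) ≤ √((t - s) * B) := by
  refine (integral_sqrt_le_sqrt_mul_integral hf hf0).trans (Real.sqrt_le_sqrt ?_)
  rw [measureReal_restrict_apply_univ, Real.volume_real_Ico_of_le hst]
  exact mul_le_mul_of_nonneg_left hB (sub_nonneg.2 hst)

theorem iUnion_Ico_pow_mul {b T : ℝ} (hb : 1 < b) (hT : 0 < T) :
    ⋃ k : ℕ, Ico (b ^ k * T) (b ^ (k + 1) * T) = Ici T := by
  ext x
  simp only [mem_iUnion, mem_Ico, mem_Ici]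
  constructor
  · rintro ⟨k, hk, -⟩
    exact (le_mul_of_one_le_left hT.le (one_le_pow₀ hb.le)).trans hk
  · intro hx
    obtain ⟨k, hk⟩ := exists_nat_pow_near ((one_le_div hT).2 hx) hb
    exact ⟨k, (le_div_iff₀ hT).1 hk.1, (div_lt_iff₀ hT).1 hk.2⟩

theorem integrableOn_Ici_of_integral_norm_Ico_pow_le {E : Type*} [NormedAddCommGroup E]
    {g : ℝ → E} {b T C ρ : ℝ} (hb : 1 < b) (hT : 0 < T) (hρ0 : 0 ≤ ρ) (hρ1 : ρ < 1)
    (hg : ∀ k : ℕ, IntegrableOn g (Ico (b ^ k * T) (b ^ (k + 1) * T)))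
    (hbound : ∀ k : ℕ, ∫ x in Ico (b ^ k * T) (b ^ (k + 1) * T), ‖g x‖ ≤ C * ρ ^ k) :
    IntegrableOn g (Ici T) := by
  rw [← iUnion_Ico_pow_mul hb hT]
  exact integrableOn_iUnion_of_summable_integral_norm hg <|
    .of_nonneg_of_le (fun k => integral_nonneg fun x => norm_nonneg _) hbound
      ((summable_geometric_of_lt_one hρ0 hρ1).mul_left C)

theorem mul_rpow_integral_Ioi_le {f : ℝ → ℝ} {α ζ s t : ℝ} (hα : 0 ≤ α) (hζ : 0 ≤ ζ)
    (hst : s ≤ t) (hf : IntegrableOn f (Ioi s)) (hf0 : ∀ x ∈ Ioi s, 0 ≤ f x)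
    (htail : ∀ᵐ τ ∂volume.restrict (Ioc s t), (∫ x in Ioi τ, f x) ^ α ≤ ζ * f τ) :
    (t - s) * (∫ x in Ioi t, f x) ^ α ≤ ζ * ∫ x in Ioi s, f x := by
  have hf0' : 0 ≤ᵐ[volume.restrict (Ioi s)] f :=
    (ae_restrict_iff' measurableSet_Ioi).2 (.of_forall hf0)
  have hanti : ∀ τ ∈ Ioc s t, ∫ x in Ioi t, f x ≤ ∫ x in Ioi τ, f x := fun τ hτ =>
    setIntegral_mono_set (hf.mono_set (Ioi_subset_Ioi hτ.1.le))
      (ae_restrict_of_ae_restrict_of_subset (Ioi_subset_Ioi hτ.1.le) hf0')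
      (Ioi_subset_Ioi hτ.2).eventuallyLE
  have hFt : 0 ≤ ∫ x in Ioi t, f x :=
    setIntegral_nonneg measurableSet_Ioi fun x hx => hf0 x (hst.trans_lt hx)
  have hpt : ∀ᵐ τ ∂volume.restrict (Ioc s t), (∫ x in Ioi t, f x) ^ α ≤ ζ * f τ := by
    filter_upwards [htail, ae_restrict_mem measurableSet_Ioc] with τ hτ hmem
    exact (Real.rpow_le_rpow hFt (hanti τ hmem) hα).trans hτ
  calc (t - s) * (∫ x in Ioi t, f x) ^ α = ∫ _ in Ioc s t, (∫ x in Ioi t, f x) ^ α := by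
        rw [setIntegral_const, Real.volume_real_Ioc_of_le hst, smul_eq_mul]
    _ ≤ ∫ τ in Ioc s t, ζ * f τ :=
        integral_mono_ae (integrableOn_const measure_Ioc_lt_top.ne)
          ((hf.mono_set Ioc_subset_Ioi_self).const_mul ζ) hpt
    _ = ζ * ∫ τ in Ioc s t, f τ := integral_const_mul ζ _
    _ ≤ ζ * ∫ x in Ioi s, f x := mul_le_mul_of_nonneg_left
        (setIntegral_mono_set hf hf0' Ioc_subset_Ioi_self.eventuallyLE) hζ

theorem exists_le_mul_pow_of_rpow_recursion {a : ℕ → ℝ} {α b c θ : ℝ} (hα : 1 < α)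
    (hc : 0 < c) (hθ : 0 < θ) (hθb : θ ^ (α - 1) * b = 1) (ha : ∀ k, 0 ≤ a k)
    (hrec : ∀ k, c * b ^ k * a (k + 1) ^ α ≤ a k) : ∃ M, ∀ k, a k ≤ M * θ ^ k := by
  -- `c θ^α M^(α-1) ≥ 1` makes `k ↦ M θ^k` a supersolution of the recursion.
  obtain ⟨M, hM1, hM0, hMpos⟩ : ∃ M, 1 ≤ c * θ ^ α * M ^ (α - 1) ∧ a 0 ≤ M ∧ 0 < M :=
    ((((tendsto_rpow_atTop (sub_pos.2 hα)).const_mul_atTop (by positivity)).eventually_ge_atTop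
      1).and ((eventually_ge_atTop (a 0)).and (eventually_gt_atTop 0))).exists
  have hb : 0 < b := pos_of_mul_pos_right (hθb ▸ one_pos) (by positivity)
  refine ⟨M, fun k => ?_⟩
  induction k with
  | zero => simpa using hM0
  | succ k ih =>
    have hθα : θ ^ α = θ ^ (α - 1) * θ := by
      rw [Real.rpow_sub_one hθ.ne', div_mul_cancel₀ _ hθ.ne']
    have hMα : M ^ α = M ^ (α - 1) * M := by
      rw [Real.rpow_sub_one hMpos.ne', div_mul_cancel₀ _ hMpos.ne']
    have hscale :
        (M * θ ^ (k + 1)) ^ α * (c * b ^ k) = c * θ ^ α * M ^ (α - 1) * (M * θ ^ k) := by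
      rw [Real.mul_rpow hMpos.le (by positivity), ← Real.rpow_natCast_mul hθ.le,
        mul_comm ((k + 1 : ℕ) : ℝ) α, Real.rpow_mul_natCast hθ.le, hMα, hθα]
      have hpow : (θ ^ (α - 1) * b) ^ k = 1 := by rw [hθb, one_pow]
      linear_combination (c * M ^ (α - 1) * M * θ ^ (α - 1) * θ ^ (k + 1)) * hpow
    rw [← Real.rpow_le_rpow_iff (ha _) (by positivity) (by linarith : 0 < α)]
    refine le_of_mul_le_mul_right ?_ (by positivity : 0 < c * b ^ k)
    calc a (k + 1) ^ α * (c * b ^ k) ≤ a k := by linarith [hrec k]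
      _ ≤ M * θ ^ k := ih
      _ ≤ c * θ ^ α * M ^ (α - 1) * (M * θ ^ k) := le_mul_of_one_le_left (by positivity) hM1
      _ = (M * θ ^ (k + 1)) ^ α * (c * b ^ k) := hscale.symm

theorem exists_rpow_sub_one_mul_two_eq_one {α : ℝ} (hα1 : 1 < α) (hα2 : α < 2) :
    ∃ θ : ℝ, 0 < θ ∧ θ ^ (α - 1) * 2 = 1 ∧ 2 * θ < 1 := by
  refine ⟨2 ^ (-(α - 1)⁻¹), by positivity, ?_, ?_⟩
  · rw [← Real.rpow_mul zero_le_two, neg_mul, inv_mul_cancel₀ (sub_pos.2 hα1).ne',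
      Real.rpow_neg_one]
    norm_num
  · have hlt : (2 : ℝ) ^ (-(α - 1)⁻¹) < 2 ^ (-1 : ℝ) :=
      Real.rpow_lt_rpow_of_exponent_lt one_lt_two
        (neg_lt_neg ((one_lt_inv₀ (sub_pos.2 hα1)).2 (by linarith)))
    rw [Real.rpow_neg_one] at hlt
    linarith

theorem exists_integral_Ioi_two_pow_mul_le {f : ℝ → ℝ} {α ζ T θ : ℝ} (hα : 1 < α)
    (hζ : 0 < ζ) (hT : 0 < T) (hθ : 0 < θ) (hθ2 : θ ^ (α - 1) * 2 = 1)
    (hf : IntegrableOn f (Ici T)) (hf0 : ∀ x ∈ Ici T, 0 ≤ f x)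
    (htail : ∀ᵐ s ∂volume.restrict (Ioi T), (∫ τ in Ioi s, f τ) ^ α ≤ ζ * f s) :
    ∃ M, ∀ k : ℕ, ∫ x in Ioi (2 ^ k * T), f x ≤ M * θ ^ k := by
  have hTk (k : ℕ) : T ≤ 2 ^ k * T := le_mul_of_one_le_left hT.le (one_le_pow₀ one_le_two)
  have hf0k (k : ℕ) : ∀ x ∈ Ioi (2 ^ k * T), 0 ≤ f x := fun x hx => hf0 x ((hTk k).trans hx.le)
  refine exists_le_mul_pow_of_rpow_recursion hα (div_pos hT hζ) hθ hθ2
    (fun k => setIntegral_nonneg measurableSet_Ioi (hf0k k)) fun k => ?_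
  have hstep := mul_rpow_integral_Ioi_le (t := 2 ^ (k + 1) * T) (by linarith) hζ.le
    (by gcongr; exacts [one_le_two, k.le_succ]) (hf.mono_set (Ioi_subset_Ici (hTk k))) (hf0k k)
    (ae_restrict_of_ae_restrict_of_subset (Ioc_subset_Ioi_self.trans (Ioi_subset_Ioi (hTk k)))
      htail)
  rw [div_mul_eq_mul_div, div_mul_eq_mul_div, div_le_iff₀ hζ]
  rw [pow_succ] at hstep ⊢
  linarith

theorem integrableOn_sqrt_Ici_of_integral_Ioi_two_pow_mul_le {f : ℝ → ℝ} {T M θ : ℝ}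
    (hT : 0 < T) (hθ : 0 ≤ θ) (h2θ : 2 * θ < 1) (hf : IntegrableOn f (Ici T))
    (hf0 : ∀ x ∈ Ici T, 0 ≤ f x) (hM : ∀ k : ℕ, ∫ x in Ioi (2 ^ k * T), f x ≤ M * θ ^ k) :
    IntegrableOn (fun x => √(f x)) (Ici T) := by
  have hM0 : 0 ≤ M := by
    have h0 := hM 0
    rw [pow_zero, one_mul, pow_zero, mul_one] at h0
    exact (setIntegral_nonneg measurableSet_Ioi fun x hx => hf0 x hx.le).trans h0
  have hsub (k : ℕ) : Ici (2 ^ k * T) ⊆ Ici T :=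
    Ici_subset_Ici.2 (le_mul_of_one_le_left hT.le (one_le_pow₀ one_le_two))
  have hf' (k : ℕ) : IntegrableOn f (Ici (2 ^ k * T)) := hf.mono_set (hsub k)
  have hf0' (k : ℕ) : 0 ≤ᵐ[volume.restrict (Ici (2 ^ k * T))] f :=
    (ae_restrict_iff' measurableSet_Ici).2 (.of_forall fun x hx => hf0 x (hsub k hx))
  have hblock (k : ℕ) : IntegrableOn f (Ico (2 ^ k * T) (2 ^ (k + 1) * T)) :=
    (hf' k).mono_set Ico_subset_Ici_self
  have hblock0 (k : ℕ) : 0 ≤ᵐ[volume.restrict (Ico (2 ^ k * T) (2 ^ (k + 1) * T))] f :=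
    ae_restrict_of_ae_restrict_of_subset Ico_subset_Ici_self (hf0' k)
  refine integrableOn_Ici_of_integral_norm_Ico_pow_le (C := √(T * M)) one_lt_two hT
    (Real.sqrt_nonneg (2 * θ)) ((Real.sqrt_lt' one_pos).2 (by simpa using h2θ))
    (fun k => Integrable.sqrt (hblock k) (hblock0 k)) (fun k => ?_)
  simp only [Real.norm_of_nonneg (Real.sqrt_nonneg _)]
  calc ∫ x in Ico _ _, √(f x) ≤ √((2 ^ (k + 1) * T - 2 ^ k * T) * (M * θ ^ k)) :=
        integral_sqrt_Ico_le (by gcongr <;> simp) (hblock k) (hblock0 k)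
          (((setIntegral_mono_set (hf' k) (hf0' k) Ico_subset_Ici_self.eventuallyLE).trans_eq
            integral_Ici_eq_integral_Ioi).trans (hM k))
    _ = √((√(T * M) * √(2 * θ) ^ k) ^ 2) := by
        rw [mul_pow, Real.sq_sqrt (by positivity), ← pow_mul, mul_comm k 2, pow_mul,
          Real.sq_sqrt (by positivity)]
        congr 1
        ring
    _ = √(T * M) * √(2 * θ) ^ k := Real.sqrt_sq (by positivity)

theorem stmt12_general (f : ℝ → ℝ) (hfnn : ∀ t, 0 ≤ t → 0 ≤ f t)
    (hfint : IntegrableOn f (Set.Ici 0))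
    (α ζ Tstar : ℝ) (hα1 : 1 < α) (hα2 : α < 2) (hζ : 0 < ζ) (hT : 0 < Tstar)
    (htail : ∀ᵐ s ∂(volume.restrict (Set.Ioi Tstar)),
      (∫ τ in Set.Ioi s, f τ) ^ α ≤ ζ * f s) :
    IntegrableOn (fun s => Real.sqrt (f s)) (Set.Ioi Tstar) := by
  have hf : IntegrableOn f (Ici Tstar) := hfint.mono_set (Ici_subset_Ici.2 hT.le)
  have hf0 : ∀ x ∈ Ici Tstar, 0 ≤ f x := fun x hx => hfnn x (hT.le.trans hx)
  obtain ⟨θ, hθ, hθ2, h2θ⟩ := exists_rpow_sub_one_mul_two_eq_one hα1 hα2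
  obtain ⟨M, hM⟩ := exists_integral_Ioi_two_pow_mul_le hα1 hζ hT hθ hθ2 hf hf0 htail
  exact (integrableOn_sqrt_Ici_of_integral_Ioi_two_pow_mul_le hT hθ.le h2θ hf hf0 hM).mono_set
    Ioi_subset_Ici_self

/-- From the tail inequality for the dissipation rate `f`, conclude `√f ∈ L¹(T*,∞)`. -/
theorem stmt12 (f : ℝ → ℝ) (hfm : Measurable f) (hfnn : ∀ t, 0 ≤ t → 0 ≤ f t)
    (hfint : IntegrableOn f (Set.Ici 0))
    (α ζ Tstar : ℝ) (hα1 : 1 < α) (hα2 : α < 2) (hζ : 0 < ζ) (hT : 0 < Tstar)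
    (htail : ∀ᵐ s ∂(volume.restrict (Set.Ioi Tstar)),
      (∫ τ in Set.Ioi s, f τ) ^ α ≤ ζ * f s) :
    IntegrableOn (fun s => Real.sqrt (f s)) (Set.Ioi Tstar) :=
  stmt12_general f hfnn hfint α ζ Tstar hα1 hα2 hζ hT htail
end
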